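/- Let φ₁₂ : ℂ[Z₆, Z₁₃, Z₁₄, Z₁₅, Z₁₆] → ℂ[t] be the ℂ-algebra homomorphism determined by Z₆ ↦ t⁶, Z₁₃ ↦ t¹³, Z₁₄ ↦ t¹⁴, Z₁₅ ↦ t¹⁵, Z₁₆ ↦ t¹⁶. Then the kernel of φ₁₂ is the ideal generated by the nine polynomials Z₁₃² − Z₆²Z₁₄, Z₁₃Z₁₄ − Z₆²Z₁₅, Z₁₄² − Z₁₃Z₁₅, Z₁₄² − Z₆²Z₁₆, Z₁₃Z₁₆ − Z₁₄Z₁₅, Z₁₅² − Z₆⁵, Z₁₄Z₁₆ − Z₆⁵, Z₁₅Z₁₆ − Z₆³Z₁₃, and Z₁₆² − Z₆³Z₁₄. -/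

import Mathlib

/-!
The semigroup `S = ⟨6, 13, 14, 15, 16⟩` has Apéry set `{0, 13, 14, 15, 16, 29}` with respect
to `6`: one element in each residue class mod `6`. Modulo the nine binomials, a product of a
variable with one of the monomials `1, Z₁₃, Z₁₄, Z₁₅, Z₁₆, Z₁₃Z₁₆` is `Z₆ᵏ` times another one
of them, so these six monomials span the quotient ring over `ℂ[Z₆]`. Their images `t^e` have
pairwise distinct aperyExponents mod `6`, so they are linearly independent over `ℂ[t⁶]`, and the map
induced by `φ₁₂` on the quotient is injective.
-/

open MvPolynomial
open scoped Polynomial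

theorem Submodule.eq_top_of_one_mem_of_mul_mem {R A : Type*} [CommSemiring R] [Semiring A]
    [Algebra R A] {s : Set A} (hs : Algebra.adjoin R s = ⊤) (N : Submodule R A) (h1 : 1 ∈ N)
    (hmul : ∀ x ∈ s, ∀ n ∈ N, x * n ∈ N) : N = ⊤ := by
  have key : ∀ a ∈ Algebra.adjoin R s, ∀ n ∈ N, a * n ∈ N := by
    intro a ha
    induction ha using Algebra.adjoin_induction with
    | mem x hx => exact hmul x hx
    | algebraMap r => intro n hn; simpa [Algebra.smul_def] using N.smul_mem r hn
    | add x y _ _ hx hy => intro n hn; simpa [add_mul] using N.add_mem (hx n hn) (hy n hn)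
    | mul x y _ _ hx hy => intro n hn; simpa [mul_assoc] using hx _ (hy n hn)
  exact eq_top_iff.mpr fun a _ => by simpa using key a (hs ▸ Algebra.mem_top) 1 h1

open Polynomial in
theorem Polynomial.eq_zero_of_sum_expand_mul_X_pow_eq_zero {R : Type*} [CommSemiring R] {n m : ℕ}
    (hm : 0 < m) {e : Fin n → ℕ} (he : ∀ i j, e i ≡ e j [MOD m] → i = j) {a : Fin n → R[X]}
    (h : ∑ i, expand R m (a i) * X ^ e i = 0) (i : Fin n) : a i = 0 := by
  ext k
  have hcoeff := congrArg (coeff · (m * k + e i)) h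
  simp only [finsetSum_coeff, coeff_mul_X_pow', coeff_expand hm, coeff_zero] at hcoeff
  rw [Finset.sum_eq_single i] at hcoeff
  · simpa [hm.ne'] using hcoeff
  · intro j _ hji
    have : ¬ (e j ≤ m * k + e i ∧ m ∣ m * k + e i - e j) := by
      rintro ⟨hle, hdvd⟩
      refine hji (he j i ?_)
      exact ((Nat.modEq_iff_dvd' hle).mpr hdvd).trans (by simp [Nat.ModEq])
    split_ifs with h1 h2 <;> first | rfl | exact absurd ⟨h1, h2⟩ this
  · simp

noncomputable section
namespace Phi12

abbrev φ : MvPolynomial (Fin 5) ℂ →ₐ[ℂ] ℂ[X] :=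
  aeval (![Polynomial.X ^ 6, Polynomial.X ^ 13, Polynomial.X ^ 14, Polynomial.X ^ 15,
    Polynomial.X ^ 16] : Fin 5 → ℂ[X])

abbrev I : Ideal (MvPolynomial (Fin 5) ℂ) :=
  Ideal.span {(X 1 : MvPolynomial (Fin 5) ℂ) ^ 2 - (X 0) ^ 2 * X 2,
    X 1 * X 2 - (X 0) ^ 2 * X 3,
    (X 2) ^ 2 - X 1 * X 3,
    (X 2) ^ 2 - (X 0) ^ 2 * X 4,
    X 1 * X 4 - X 2 * X 3,
    (X 3) ^ 2 - (X 0) ^ 5,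
    X 2 * X 4 - (X 0) ^ 5,
    X 3 * X 4 - (X 0) ^ 3 * X 1,
    (X 4) ^ 2 - (X 0) ^ 3 * X 2}

theorem I_le_ker : I ≤ RingHom.ker φ := by
  rw [Ideal.span_le]
  intro g hg
  simp only [Set.mem_insert_iff, Set.mem_singleton_iff] at hg
  rcases hg with rfl | rfl | rfl | rfl | rfl | rfl | rfl | rfl | rfl <;>
    simp only [SetLike.mem_coe, RingHom.mem_ker, map_sub, map_mul, map_pow, aeval_X,
      Matrix.cons_val, Matrix.cons_val_zero, Matrix.cons_val_one] <;> ring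

abbrev Q : Type := MvPolynomial (Fin 5) ℂ ⧸ I

def z (i : Fin 5) : Q := Ideal.Quotient.mk I (X i)

theorem z_relations :
    z 1 ^ 2 = z 0 ^ 2 * z 2 ∧ z 1 * z 2 = z 0 ^ 2 * z 3 ∧ z 2 ^ 2 = z 1 * z 3 ∧
    z 2 ^ 2 = z 0 ^ 2 * z 4 ∧ z 1 * z 4 = z 2 * z 3 ∧ z 3 ^ 2 = z 0 ^ 5 ∧
    z 2 * z 4 = z 0 ^ 5 ∧ z 3 * z 4 = z 0 ^ 3 * z 1 ∧ z 4 ^ 2 = z 0 ^ 3 * z 2 := by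
  simp only [z, ← map_pow, ← map_mul, Ideal.Quotient.eq]
  refine ⟨?_, ?_, ?_, ?_, ?_, ?_, ?_, ?_, ?_⟩ <;> exact Ideal.subset_span (by simp)

def aperyMonomial : Fin 6 → Q := ![1, z 1, z 2, z 3, z 4, z 1 * z 4]

def aperyExponent : Fin 6 → ℕ := ![0, 13, 14, 15, 16, 29]

theorem z_mul_aperyMonomial (i : Fin 5) (j : Fin 6) :
    ∃ k j', z i * aperyMonomial j = z 0 ^ k * aperyMonomial j' := by
  obtain ⟨h₁, h₂, h₃, h₄, h₅, h₆, h₇, h₈, h₉⟩ := z_relations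
  fin_cases i
  · exact ⟨1, j, by simp only [Fin.zero_eta, pow_one]⟩
  -- `(k, j')` is forced by weights: `z i` has weight `6, 13, 14, 15, 16` and the weight of
  -- `z i * aperyMonomial j` must be `6 k + aperyExponent j'`.
  all_goals fin_cases j
  · exact ⟨0, 1, by simp [aperyMonomial]⟩
  · exact ⟨2, 2, by simp [aperyMonomial]; linear_combination h₁⟩
  · exact ⟨2, 3, by simp [aperyMonomial]; linear_combination h₂⟩
  · exact ⟨2, 4, by simp [aperyMonomial]; linear_combination h₄ - h₃⟩
  · exact ⟨0, 5, by simp [aperyMonomial]⟩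
  · exact ⟨7, 0, by simp [aperyMonomial]; linear_combination z 4 * h₁ + z 0 ^ 2 * h₇⟩
  · exact ⟨0, 2, by simp [aperyMonomial]⟩
  · exact ⟨2, 3, by simp [aperyMonomial]; linear_combination h₂⟩
  · exact ⟨2, 4, by simp [aperyMonomial]; linear_combination h₄⟩
  · exact ⟨0, 5, by simp [aperyMonomial]; linear_combination -h₅⟩
  · exact ⟨5, 0, by simp [aperyMonomial]; linear_combination h₇⟩
  · exact ⟨5, 1, by simp [aperyMonomial]; linear_combination z 1 * h₇⟩
  · exact ⟨0, 3, by simp [aperyMonomial]⟩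
  · exact ⟨2, 4, by simp [aperyMonomial]; linear_combination h₄ - h₃⟩
  · exact ⟨0, 5, by simp [aperyMonomial]; linear_combination -h₅⟩
  · exact ⟨5, 0, by simp [aperyMonomial]; linear_combination h₆⟩
  · exact ⟨3, 1, by simp [aperyMonomial]; linear_combination h₈⟩
  · exact ⟨5, 2, by simp [aperyMonomial]; linear_combination z 1 * h₈ + z 0 ^ 3 * h₁⟩
  · exact ⟨0, 4, by simp [aperyMonomial]⟩
  · exact ⟨0, 5, by simp [aperyMonomial]; ring⟩
  · exact ⟨5, 0, by simp [aperyMonomial]; linear_combination h₇⟩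
  · exact ⟨3, 1, by simp [aperyMonomial]; linear_combination h₈⟩
  · exact ⟨3, 2, by simp [aperyMonomial]; linear_combination h₉⟩
  · exact ⟨5, 3, by simp [aperyMonomial]; linear_combination z 1 * h₉ + z 0 ^ 3 * h₂⟩

theorem adjoin_range_z : Algebra.adjoin ℂ (Set.range z) = ⊤ := by
  have : Set.range z = Ideal.Quotient.mkₐ ℂ I '' Set.range X := by
    rw [← Set.range_comp]; rfl
  rw [this, Algebra.adjoin_image, MvPolynomial.adjoin_range_X, Algebra.map_top,
    AlgHom.range_eq_top]
  exact Ideal.Quotient.mkₐ_surjective ℂ I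

def aperyCombination : (Fin 6 → ℂ[X]) →ₗ[ℂ] Q where
  toFun a := ∑ j, Polynomial.aeval (z 0) (a j) * aperyMonomial j
  map_add' a b := by simp [add_mul, Finset.sum_add_distrib]
  map_smul' c a := by simp [Finset.smul_sum, smul_mul_assoc]

theorem aperyCombination_single (j : Fin 6) (f : ℂ[X]) :
    aperyCombination (Pi.single j f) = Polynomial.aeval (z 0) f * aperyMonomial j := by
  simp [aperyCombination, Pi.single_apply, apply_ite, ite_mul]

theorem z_mul_mem_range_aperyCombination (i : Fin 5) (a : Fin 6 → ℂ[X]) :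
    z i * aperyCombination a ∈ LinearMap.range aperyCombination := by
  rw [← Finset.univ_sum_single a, map_sum, Finset.mul_sum]
  refine Submodule.sum_mem _ fun j _ => ?_
  obtain ⟨k, j', hk⟩ := z_mul_aperyMonomial i j
  refine ⟨Pi.single j' (a j * Polynomial.X ^ k), ?_⟩
  rw [aperyCombination_single, aperyCombination_single, map_mul, map_pow, Polynomial.aeval_X, mul_assoc,
    ← hk, mul_left_comm]

theorem range_aperyCombination : LinearMap.range aperyCombination = ⊤ := by
  refine Submodule.eq_top_of_one_mem_of_mul_mem adjoin_range_z _ ⟨Pi.single 0 1, ?_⟩ ?_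
  · simp [aperyCombination_single, aperyMonomial]
  · rintro _ ⟨i, rfl⟩ _ ⟨a, rfl⟩
    exact z_mul_mem_range_aperyCombination i a

def ψ : Q →ₐ[ℂ] ℂ[X] := Ideal.Quotient.liftₐ I φ fun _ ha => I_le_ker ha

theorem ψ_z (i : Fin 5) : ψ (z i) = φ (X i) := rfl

theorem ψ_aperyCombination (a : Fin 6 → ℂ[X]) :
    ψ (aperyCombination a) = ∑ j, Polynomial.expand ℂ 6 (a j) * Polynomial.X ^ aperyExponent j := by
  have haperyMonomial : ∀ j, ψ (aperyMonomial j) = Polynomial.X ^ aperyExponent j := by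
    intro j
    fin_cases j <;> simp [aperyMonomial, aperyExponent, ψ_z, ← pow_add]
  simp only [aperyCombination, LinearMap.coe_mk, AddHom.coe_mk, map_sum, map_mul, haperyMonomial,
    ← Polynomial.aeval_algHom_apply, ψ_z, aeval_X, Matrix.cons_val_zero,
    ← Polynomial.expand_aeval, Polynomial.aeval_X_left_apply]

theorem ψ_injective : Function.Injective ψ := by
  refine (injective_iff_map_eq_zero ψ).mpr fun q hq => ?_
  obtain ⟨a, rfl⟩ : q ∈ LinearMap.range aperyCombination := range_aperyCombination ▸ Submodule.mem_top
  have ha : a = 0 := funext <|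
    Polynomial.eq_zero_of_sum_expand_mul_X_pow_eq_zero (by norm_num) (by decide)
      (ψ_aperyCombination a ▸ hq)
  rw [ha, map_zero]

end Phi12

end

/-- The variables are `X 0 = Z₆`, `X 1 = Z₁₃`, `X 2 = Z₁₄`, `X 3 = Z₁₅`, `X 4 = Z₁₆`. -/
theorem ker_phi12 :
    RingHom.ker (MvPolynomial.aeval
        (![Polynomial.X ^ 6, Polynomial.X ^ 13, Polynomial.X ^ 14, Polynomial.X ^ 15,
           Polynomial.X ^ 16] :
          Fin 5 → Polynomial ℂ) : MvPolynomial (Fin 5) ℂ →ₐ[ℂ] Polynomial ℂ) =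
      Ideal.span {(X 1 : MvPolynomial (Fin 5) ℂ) ^ 2 - (X 0) ^ 2 * X 2,
        X 1 * X 2 - (X 0) ^ 2 * X 3,
        (X 2) ^ 2 - X 1 * X 3,
        (X 2) ^ 2 - (X 0) ^ 2 * X 4,
        X 1 * X 4 - X 2 * X 3,
        (X 3) ^ 2 - (X 0) ^ 5,
        X 2 * X 4 - (X 0) ^ 5,
        X 3 * X 4 - (X 0) ^ 3 * X 1,
        (X 4) ^ 2 - (X 0) ^ 3 * X 2} := by
  ext p
  rw [RingHom.mem_ker, ← Ideal.Quotient.eq_zero_iff_mem,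
    ← map_eq_zero_iff Phi12.ψ Phi12.ψ_injective]
  rfl
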